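/- arXiv:2303.17154 — 2 statements merged into one kernel-verified Lean document; each statement's English description precedes it below -/
import Mathlib

section
/- Let $a > b \geq 2$ be coprime integers and $n \geq 2$ an integer with $\gcd(a+b, n) = 1$. Then the ideal $I = (xv - w^n,\; x^a - v^b)$ of $\mathbb{C}[v,x,w]$ is prime. -/
open MvPolynomial

noncomputable section IdealPrimeAux

namespace IdealPrimeAux

abbrev Rg := MvPolynomial (Fin 3) ℂ

/-- The monomial `v^i x^j w^k`. -/
def P (i j k : ℕ) : Rg := (X 0 : Rg) ^ i * X 1 ^ j * X 2 ^ k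

def Igen (a b n : ℕ) : Ideal Rg :=
  Ideal.span {(X 1 : Rg) * X 0 - (X 2 : Rg) ^ n, (X 1 : Rg) ^ a - (X 0 : Rg) ^ b}

/-- The parametrization `v ↦ s^{na}, x ↦ s^{nb}, w ↦ s^{a+b}`. -/
def φ (a b n : ℕ) : Rg →ₐ[ℂ] Polynomial ℂ :=
  aeval ![Polynomial.X ^ (n*a), Polynomial.X ^ (n*b), Polynomial.X ^ (a+b)]

lemma phi_P (a b n i j k : ℕ) :
    φ a b n (P i j k) = Polynomial.X ^ (n*a*i + n*b*j + (a+b)*k) := by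
  simp only [φ, P, map_mul, map_pow, aeval_X, Matrix.cons_val_zero, Matrix.cons_val_one,
    Matrix.head_cons, Matrix.cons_val_two, Matrix.tail_cons, ← pow_mul, ← pow_add]

def e (i j k : ℕ) : Fin 3 →₀ ℕ :=
  Finsupp.single 0 i + Finsupp.single 1 j + Finsupp.single 2 k

lemma CP_eq_monomial (r : ℂ) (i j k : ℕ) : C r * P i j k = monomial (e i j k) r := by
  rw [P, e, X_pow_eq_monomial, X_pow_eq_monomial, X_pow_eq_monomial]
  rw [monomial_mul, monomial_mul]
  simp [C_mul_monomial]

lemma e_apply (i j k : ℕ) : e i j k 0 = i ∧ e i j k 1 = j ∧ e i j k 2 = k := by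
  refine ⟨?_, ?_, ?_⟩ <;> simp [e, Finsupp.single_apply]

lemma monomial_eq_CP (u : Fin 3 →₀ ℕ) (r : ℂ) :
    monomial u r = C r * P (u 0) (u 1) (u 2) := by
  rw [monomial_eq, P, Finsupp.prod_pow, Fin.prod_univ_three]

lemma fin3_ext {u v : Fin 3 →₀ ℕ} (h0 : u 0 = v 0) (h1 : u 1 = v 1) (h2 : u 2 = v 2) :
    u = v := by
  apply Finsupp.ext
  intro i
  fin_cases i <;> assumption

lemma phi_monomial (a b n : ℕ) (u : Fin 3 →₀ ℕ) (r : ℂ) :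
    φ a b n (monomial u r)
      = Polynomial.C r * Polynomial.X ^ (n*a*(u 0) + n*b*(u 1) + (a+b)*(u 2)) := by
  rw [monomial_eq_CP, map_mul, phi_P]
  congr 1
  simp [φ, aeval_C, Polynomial.algebraMap_eq]

lemma f1_mem (a b n : ℕ) : (X 1 : Rg) * X 0 - (X 2 : Rg) ^ n ∈ Igen a b n :=
  Ideal.subset_span (by simp)

lemma f2_mem (a b n : ℕ) : (X 1 : Rg) ^ a - (X 0 : Rg) ^ b ∈ Igen a b n :=
  Ideal.subset_span (by simp)

/-- The binomials `x^{a-t} w^{tn} - v^{b+t}` all lie in the ideal. -/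
lemma gmem (a b n : ℕ) : ∀ t, t ≤ a →
    (X 1 : Rg) ^ (a - t) * X 2 ^ (t * n) - X 0 ^ (b + t) ∈ Igen a b n := by
  intro t
  induction t with
  | zero => intro _; simpa using f2_mem a b n
  | succ t ih =>
    intro ht
    have hmem := ih (Nat.le_of_succ_le ht)
    obtain ⟨c, hc⟩ : ∃ c, a = (t+1) + c := Nat.exists_eq_add_of_le ht
    subst hc
    have key : (X 1 : Rg) ^ ((t+1+c) - (t+1)) * X 2 ^ ((t+1) * n) - X 0 ^ (b + (t+1))
        = X 0 * ((X 1:Rg) ^ ((t+1+c) - t) * X 2 ^ (t*n) - X 0 ^ (b+t))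
          - X 1 ^ ((t+1+c)-(t+1)) * X 2 ^ (t*n) * ((X 1:Rg) * X 0 - X 2 ^ n) := by
      have e1 : (t+1+c) - (t+1) = c := by omega
      have e2 : (t+1+c) - t = c + 1 := by omega
      rw [e1, e2]; ring
    rw [key]
    exact Ideal.sub_mem _ (Ideal.mul_mem_left _ _ hmem) (Ideal.mul_mem_left _ _ (f1_mem _ _ _))

/-- Normal-form exponents. -/
def Nor (a n i j k : ℕ) : Prop :=
  (j = 0 ∧ k < n * a) ∨ (i = 0 ∧ 0 < j ∧ j < a ∧ k < (a - j) * n)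

/-- Every monomial is congruent modulo the ideal to a normal monomial of the same weight. -/
lemma reduce (a b n : ℕ) (hb : 2 ≤ b) (hab : b < a) (hn : 2 ≤ n) :
    ∀ N i j k, (n+1)*j + k ≤ N →
    ∃ i' j' k', Nor a n i' j' k' ∧
      n*a*i + n*b*j + (a+b)*k = n*a*i' + n*b*j' + (a+b)*k' ∧
      P i j k - P i' j' k' ∈ Igen a b n := by
  intro N
  induction N with
  | zero =>
    intro i j k h
    have hj0 : (n+1)*j = 0 := by omega
    have hj : j = 0 := by rcases Nat.mul_eq_zero.mp hj0 with h' | h' <;> omega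
    have hk : k = 0 := by omega
    exact ⟨i, j, k, Or.inl ⟨hj, by
      subst hk; exact Nat.mul_pos (by omega) (by omega)⟩, rfl, by simp⟩
  | succ N ih =>
    intro i j k h
    by_cases hnor : Nor a n i j k
    · exact ⟨i, j, k, hnor, rfl, by simp⟩
    rcases Nat.eq_zero_or_pos j with hj | hj
    · -- j = 0, so k ≥ n*a
      subst hj
      have hk : n*a ≤ k := by
        by_contra hk
        exact hnor (Or.inl ⟨rfl, by omega⟩)
      obtain ⟨d, rfl⟩ : ∃ d, k = n*a + d := ⟨k - n*a, by omega⟩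
      have hna : 1 ≤ n*a := Nat.mul_pos (by omega) (by omega)
      obtain ⟨i', j', k', h1, h2, h3⟩ := ih (i + (a+b)) 0 d (by omega)
      refine ⟨i', j', k', h1, by rw [← h2]; ring, ?_⟩
      have step : P i 0 (n*a+d) - P (i + (a+b)) 0 d
          = ((X 0:Rg)^i * X 2^d) * ((X 1:Rg) ^ (a - a) * X 2 ^ (a * n) - X 0 ^ (b + a)) := by
        rw [Nat.sub_self]; simp only [P]; ring
      have smem : P i 0 (n*a+d) - P (i + (a+b)) 0 d ∈ Igen a b n := by
        rw [step]; exact Ideal.mul_mem_left _ _ (gmem a b n a le_rfl)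
      have := Ideal.add_mem _ smem h3
      simpa using this
    rcases Nat.eq_zero_or_pos i with hi | hi
    · subst hi
      rcases le_or_gt a j with hja | hja
      · -- j ≥ a : rule x^a → v^b
        obtain ⟨j0, rfl⟩ : ∃ j0, j = a + j0 := ⟨j - a, by omega⟩
        have hmul : (n+1)*(a+j0) = (n+1)*a + (n+1)*j0 := by ring
        have hpos : 1 ≤ (n+1)*a := Nat.mul_pos (by omega) (by omega)
        obtain ⟨i', j', k', h1, h2, h3⟩ := ih b j0 k (by omega)
        refine ⟨i', j', k', h1, by rw [← h2]; ring, ?_⟩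
        have step : P 0 (a+j0) k - P b j0 k
            = ((X 1:Rg)^j0 * X 2^k) * ((X 1:Rg) ^ a - X 0 ^ b) := by
          simp only [P]; ring
        have smem : P 0 (a+j0) k - P b j0 k ∈ Igen a b n := by
          rw [step]; exact Ideal.mul_mem_left _ _ (f2_mem a b n)
        have := Ideal.add_mem _ smem h3
        simpa using this
      · -- 0 < j < a, so k ≥ (a-j)*n
        have hk : (a - j)*n ≤ k := by
          by_contra hk
          exact hnor (Or.inr ⟨rfl, hj, hja, by omega⟩)
        obtain ⟨c, hc, hc1⟩ : ∃ c, a = j + c ∧ 1 ≤ c := ⟨a - j, by omega, by omega⟩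
        have hajc : a - j = c := by omega
        rw [hajc] at hk
        obtain ⟨d, rfl⟩ : ∃ d, k = c*n + d := ⟨k - c*n, by omega⟩
        have hposj : 1 ≤ (n+1)*j := Nat.mul_pos (by omega) hj
        obtain ⟨i', j', k', h1, h2, h3⟩ := ih (b + c) 0 d (by omega)
        refine ⟨i', j', k', h1, by rw [← h2]; subst hc; ring, ?_⟩
        have hgm := gmem a b n c (by omega)
        have haj : a - c = j := by omega
        rw [haj] at hgm
        have step : P 0 j (c*n+d) - P (b + c) 0 d
            = ((X 2:Rg)^d) * ((X 1:Rg) ^ j * X 2 ^ (c*n) - X 0 ^ (b + c)) := by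
          simp only [P]; ring
        have smem : P 0 j (c*n+d) - P (b + c) 0 d ∈ Igen a b n := by
          rw [step]; exact Ideal.mul_mem_left _ _ hgm
        have := Ideal.add_mem _ smem h3
        simpa using this
    · -- i ≥ 1, j ≥ 1 : rule xv → w^n
      obtain ⟨i0, rfl⟩ : ∃ i0, i = i0 + 1 := ⟨i - 1, by omega⟩
      obtain ⟨j0, rfl⟩ : ∃ j0, j = j0 + 1 := ⟨j - 1, by omega⟩
      have hmul : (n+1)*(j0+1) = (n+1)*j0 + n + 1 := by ring
      obtain ⟨i', j', k', h1, h2, h3⟩ := ih i0 j0 (k + n) (by omega)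
      refine ⟨i', j', k', h1, by rw [← h2]; ring, ?_⟩
      have step : P (i0+1) (j0+1) k - P i0 j0 (k+n)
          = ((X 0:Rg)^i0 * X 1^j0 * X 2^k) * ((X 1:Rg) * X 0 - X 2 ^ n) := by
        simp only [P]; ring
      have smem : P (i0+1) (j0+1) k - P i0 j0 (k+n) ∈ Igen a b n := by
        rw [step]; exact Ideal.mul_mem_left _ _ (f1_mem a b n)
      have := Ideal.add_mem _ smem h3
      simpa using this

section Inj
variable {a b n : ℕ}

lemma coprime_facts (hcop : Nat.Coprime a b) (hcop' : Nat.Coprime (a + b) n) :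
    Nat.Coprime (n*a) (a+b) ∧ Nat.Coprime (a+b) (n*b) := by
  have hABa : Nat.Coprime (a+b) a := by
    have := (Nat.coprime_add_self_left (m := b) (n := a)).mpr hcop.symm
    simpa [Nat.add_comm] using this
  have hABb : Nat.Coprime (a+b) b := by
    have := (Nat.coprime_add_self_left (m := a) (n := b)).mpr hcop
    simpa using this
  exact ⟨Nat.Coprime.mul hcop'.symm hABa.symm, Nat.Coprime.mul_right hcop' hABb⟩

lemma case1 (hcop : Nat.Coprime a b) (hn : 2 ≤ n) (hcop' : Nat.Coprime (a + b) n)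
    (ha : 1 ≤ a)
    {i k i' k' : ℕ} (hk : k < n*a) (hk' : k' < n*a)
    (heq : n*a*i + (a+b)*k = n*a*i' + (a+b)*k') : i = i' ∧ k = k' := by
  have hz : (n*a*i + (a+b)*k : ℤ) = (n*a*i' + (a+b)*k' : ℤ) := by exact_mod_cast heq
  have hdvd : ((n*a : ℕ) : ℤ) ∣ ((a+b : ℕ) : ℤ) * ((k' : ℤ) - k) :=
    ⟨(i:ℤ) - i', by push_cast; linear_combination -hz⟩
  have hcops : IsCoprime ((n*a:ℕ):ℤ) ((a+b:ℕ):ℤ) :=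
    Nat.isCoprime_iff_coprime.mpr (coprime_facts hcop hcop').1
  have hdvd2 : ((n*a:ℕ):ℤ) ∣ ((k':ℤ) - k) := hcops.dvd_of_dvd_mul_left hdvd
  have hzero : (k':ℤ) - k = 0 :=
    Int.eq_zero_of_dvd_of_natAbs_lt_natAbs hdvd2 (by omega)
  have hkk : k = k' := by omega
  subst hkk
  have hii : n*a*i = n*a*i' := by omega
  exact ⟨Nat.eq_of_mul_eq_mul_left (Nat.mul_pos (by omega) ha) hii, rfl⟩

lemma case2 (hcop : Nat.Coprime a b) (hcop' : Nat.Coprime (a + b) n)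
    {j k j' k' : ℕ} (hja : j < a) (hj'a : j' < a)
    (heq : n*b*j + (a+b)*k = n*b*j' + (a+b)*k') : j = j' ∧ k = k' := by
  have hz : (n*b*j + (a+b)*k : ℤ) = (n*b*j' + (a+b)*k' : ℤ) := by exact_mod_cast heq
  have hdvd : ((a+b : ℕ) : ℤ) ∣ ((n*b : ℕ) : ℤ) * ((j : ℤ) - j') :=
    ⟨(k':ℤ) - k, by push_cast; linear_combination hz⟩
  have hcops : IsCoprime ((a+b:ℕ):ℤ) ((n*b:ℕ):ℤ) :=
    Nat.isCoprime_iff_coprime.mpr (coprime_facts hcop hcop').2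
  have hdvd2 : ((a+b:ℕ):ℤ) ∣ ((j:ℤ) - j') := hcops.dvd_of_dvd_mul_left hdvd
  have hzero : (j:ℤ) - j' = 0 :=
    Int.eq_zero_of_dvd_of_natAbs_lt_natAbs hdvd2 (by omega)
  have hjj : j = j' := by omega
  subst hjj
  have hk2 : (a+b)*k = (a+b)*k' := by omega
  exact ⟨rfl, Nat.eq_of_mul_eq_mul_left (by omega) hk2⟩

lemma case3 (hb : 2 ≤ b) (hab : b < a) (hcop : Nat.Coprime a b) (hn : 2 ≤ n)
    (hcop' : Nat.Coprime (a + b) n)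
    {i k j' k' : ℕ} (hk : k < n*a) (h0 : 0 < j') (hj'a : j' < a) (hk' : k' < (a - j')*n)
    (heq : n*a*i + (a+b)*k = n*b*j' + (a+b)*k') : False := by
  have hz : (n*a*i + (a+b)*k : ℤ) = (n*b*j' + (a+b)*k' : ℤ) := by exact_mod_cast heq
  have hdvd : ((a+b : ℕ) : ℤ) ∣ ((n*a : ℕ) : ℤ) * ((i : ℤ) + j') :=
    ⟨(k':ℤ) - k + n*j', by push_cast; linear_combination hz⟩
  have hcops : IsCoprime ((a+b:ℕ):ℤ) ((n*a:ℕ):ℤ) :=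
    Nat.isCoprime_iff_coprime.mpr (coprime_facts hcop hcop').1.symm
  have hdvd2 : ((a+b:ℕ):ℤ) ∣ ((i:ℤ) + j') := hcops.dvd_of_dvd_mul_left hdvd
  have hdvd3 : (a+b) ∣ (i + j') := by
    have : ((a+b : ℕ) : ℤ) ∣ ((i + j' : ℕ) : ℤ) := by push_cast; exact hdvd2
    exact_mod_cast this
  have hge : a + b ≤ i + j' := Nat.le_of_dvd (by omega) hdvd3
  obtain ⟨c, hc, hc1⟩ : ∃ c, a = j' + c ∧ 1 ≤ c := ⟨a - j', by omega, by omega⟩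
  have hajc : a - j' = c := by omega
  rw [hajc] at hk'
  have hi : b + c ≤ i := by omega
  subst hc
  have H1 : n*(j'+c)*(b+c) ≤ n*(j'+c)*i := Nat.mul_le_mul_left _ hi
  have H2 : (j'+c+b)*(k'+1) ≤ (j'+c+b)*(c*n) := Nat.mul_le_mul_left _ hk'
  nlinarith [heq, H1, H2]

lemma nor_inj (hb : 2 ≤ b) (hab : b < a) (hcop : Nat.Coprime a b) (hn : 2 ≤ n)
    (hcop' : Nat.Coprime (a + b) n)
    {i j k i' j' k' : ℕ} (h1 : Nor a n i j k) (h2 : Nor a n i' j' k')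
    (heq : n*a*i + n*b*j + (a+b)*k = n*a*i' + n*b*j' + (a+b)*k') :
    i = i' ∧ j = j' ∧ k = k' := by
  rcases h1 with ⟨hj, hk⟩ | ⟨hi, hj0, hja, hk⟩ <;>
    rcases h2 with ⟨hj', hk'⟩ | ⟨hi', hj0', hja', hk'⟩
  · subst hj; subst hj'
    have heq' : n*a*i + (a+b)*k = n*a*i' + (a+b)*k' := by omega
    obtain ⟨e1, e2⟩ := case1 hcop hn hcop' (by omega) hk hk' heq'
    exact ⟨e1, rfl, e2⟩
  · subst hj; subst hi'
    have heq' : n*a*i + (a+b)*k = n*b*j' + (a+b)*k' := by omega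
    exact absurd (case3 hb hab hcop hn hcop' hk hj0' hja' hk' heq') (by simp)
  · subst hj'; subst hi
    have heq' : n*a*i' + (a+b)*k' = n*b*j + (a+b)*k := by omega
    exact absurd (case3 hb hab hcop hn hcop' hk' hj0 hja hk heq') (by simp)
  · subst hi; subst hi'
    have heq' : n*b*j + (a+b)*k = n*b*j' + (a+b)*k' := by omega
    obtain ⟨e1, e2⟩ := case2 hcop hcop' hja hja' heq'
    exact ⟨rfl, e1, e2⟩

end Inj

/-- `φ` is injective on polynomials supported on normal monomials. -/
lemma norm_inj_poly (a b n : ℕ) (hb : 2 ≤ b) (hab : b < a) (hcop : Nat.Coprime a b)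
    (hn : 2 ≤ n) (hcop' : Nat.Coprime (a + b) n) (g : Rg)
    (hg : ∀ m ∈ g.support, Nor a n (m 0) (m 1) (m 2)) (h0 : φ a b n g = 0) : g = 0 := by
  have key : ∀ m ∈ g.support, coeff m g = 0 := by
    intro m hm
    have expand : φ a b n g = ∑ m' ∈ g.support,
        Polynomial.C (coeff m' g) *
          Polynomial.X ^ (n*a*(m' 0) + n*b*(m' 1) + (a+b)*(m' 2)) := by
      conv_lhs => rw [as_sum g]
      rw [map_sum]
      exact Finset.sum_congr rfl fun m' _ => phi_monomial a b n m' (coeff m' g)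
    have c0 : (φ a b n g).coeff (n*a*(m 0) + n*b*(m 1) + (a+b)*(m 2)) = 0 := by
      rw [h0]; simp
    rw [expand, Polynomial.finset_sum_coeff] at c0
    simp only [Polynomial.coeff_C_mul, Polynomial.coeff_X_pow, mul_ite, mul_one,
      mul_zero] at c0
    rw [Finset.sum_eq_single_of_mem m hm] at c0
    · simpa using c0
    · intro m' hm' hne
      rw [if_neg]
      intro habs
      obtain ⟨e0, e1, e2⟩ := nor_inj hb hab hcop hn hcop' (hg m' hm') (hg m hm) habs.symm
      exact hne (fin3_ext e0 e1 e2)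
  apply MvPolynomial.ext
  intro m
  by_cases hm : m ∈ g.support
  · simpa using key m hm
  · simpa using notMem_support_iff.mp hm

/-- Every polynomial reduces mod the ideal to one with normal support and the same image. -/
lemma reduce_poly (a b n : ℕ) (hb : 2 ≤ b) (hab : b < a) (hn : 2 ≤ n) (f : Rg) :
    ∃ g : Rg, f - g ∈ Igen a b n ∧ (∀ m ∈ g.support, Nor a n (m 0) (m 1) (m 2)) ∧
      φ a b n f = φ a b n g := by
  induction f using MvPolynomial.induction_on' with
  | monomial u r =>
    obtain ⟨i', j', k', hnor, hdeg, hmem⟩ :=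
      reduce a b n hb hab hn ((n+1)*(u 1) + u 2) (u 0) (u 1) (u 2) le_rfl
    refine ⟨C r * P i' j' k', ?_, ?_, ?_⟩
    · rw [monomial_eq_CP, ← mul_sub]
      exact Ideal.mul_mem_left _ _ hmem
    · rw [CP_eq_monomial]
      intro m hm
      have hsub := support_monomial_subset hm
      have hme : m = e i' j' k' := Finset.mem_singleton.mp hsub
      subst hme
      obtain ⟨q0, q1, q2⟩ := e_apply i' j' k'
      rw [q0, q1, q2]
      exact hnor
    · rw [monomial_eq_CP, map_mul, map_mul, phi_P, phi_P, hdeg]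
  | add p q hp hq =>
    obtain ⟨gp, h1, h2, h3⟩ := hp
    obtain ⟨gq, h1', h2', h3'⟩ := hq
    refine ⟨gp + gq, ?_, ?_, by rw [map_add, map_add, h3, h3']⟩
    · have hr : p + q - (gp + gq) = (p - gp) + (q - gq) := by ring
      rw [hr]
      exact Ideal.add_mem _ h1 h1'
    · intro m hm
      rcases Finset.mem_union.mp (support_add hm) with h | h
      exacts [h2 m h, h2' m h]

/-- The ideal equals the kernel of the parametrization. -/
lemma igen_eq_ker (a b n : ℕ) (hb : 2 ≤ b) (hab : b < a) (hcop : Nat.Coprime a b)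
    (hn : 2 ≤ n) (hcop' : Nat.Coprime (a + b) n) :
    Igen a b n = RingHom.ker (φ a b n) := by
  apply le_antisymm
  · rw [Igen, Ideal.span_le]
    intro f hf
    simp only [Set.mem_insert_iff, Set.mem_singleton_iff] at hf
    rcases hf with rfl | rfl <;>
    · show _ ∈ RingHom.ker (φ a b n)
      rw [RingHom.mem_ker]
      simp only [φ, map_sub, map_mul, map_pow, aeval_X, Matrix.cons_val_zero,
        Matrix.cons_val_one, Matrix.head_cons, Matrix.cons_val_two, Matrix.tail_cons,
        ← pow_mul, ← pow_add]
      rw [sub_eq_zero]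
      congr 1
      ring
  · intro f hf
    obtain ⟨g, hfg, hgnor, hphi⟩ := reduce_poly a b n hb hab hn f
    have hg0 : g = 0 := norm_inj_poly a b n hb hab hcop hn hcop' g hgnor
      (by rw [← hphi]; exact RingHom.mem_ker.mp hf)
    rw [hg0, sub_zero] at hfg
    exact hfg

end IdealPrimeAux

end IdealPrimeAux

/-- Let `a > b ≥ 2` be coprime integers and `n ≥ 2` with `gcd (a + b) n = 1`.
Then the ideal `I = (x * v - w ^ n, x ^ a - v ^ b)` of `ℂ[v,x,w]` is prime (with `v = X 0`,
`x = X 1`, `w = X 2`). -/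
theorem ideal_isPrime (a b n : ℕ) (hb : 2 ≤ b) (hab : b < a)
    (hcop : Nat.Coprime a b) (hn : 2 ≤ n) (hcop' : Nat.Coprime (a + b) n) :
    (Ideal.span
        {(X 1 : MvPolynomial (Fin 3) ℂ) * X 0 - (X 2 : MvPolynomial (Fin 3) ℂ) ^ n,
          (X 1 : MvPolynomial (Fin 3) ℂ) ^ a - (X 0 : MvPolynomial (Fin 3) ℂ) ^ b}).IsPrime := by
  have h := IdealPrimeAux.igen_eq_ker a b n hb hab hcop hn hcop'
  rw [IdealPrimeAux.Igen] at h
  rw [h]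
  exact RingHom.ker_isPrime _
end

section
/- Let $n, s', r \geq 1$ be integers with $r > s'$. In $\mathbb{C}[v,x,w]$ consider the ideals $I = (vx - w^n,\; x^{s'}(x^{r-s'} - v^{s'}))$, $I_0 = (vx - w^n,\; x^{s'})$, and $I_1 = (vx - w^n,\; x^{r-s'} - v^{s'})$. Then $I = I_0 \cap I_1$. -/
open MvPolynomial

private lemma mem_span_pair_equiv' {R S : Type*} [CommRing R] [CommRing S] (e : R ≃+* S)
    (p q x : R) : x ∈ Ideal.span {p, q} ↔ e x ∈ Ideal.span {e p, e q} := by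
  have h : ({e p, e q} : Set S) = (e : R →+* S) '' {p, q} := by
    simp [Set.image_insert_eq]
  rw [h, ← Ideal.map_span]
  constructor
  · exact fun hx => Ideal.mem_map_of_mem _ hx
  · intro hx
    obtain ⟨y, hy, hyx⟩ := (Ideal.mem_map_iff_of_surjective (e : R →+* S) e.surjective).mp hx
    rwa [← e.injective hyx]

private lemma span_pair_neg_left {R : Type*} [CommRing R] (p t : R) :
    Ideal.span {-p, t} = Ideal.span {p, t} := by
  rw [Ideal.span_insert, Ideal.span_singleton_neg, ← Ideal.span_insert]

private lemma mem_span_monic_C {A : Type*} [CommRing A] {m : Polynomial A}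
    (hm : m.Monic) (c : A) (p : Polynomial A) :
    p ∈ Ideal.span {m, Polynomial.C c} ↔ Polynomial.C c ∣ p %ₘ m := by
  constructor
  · rw [Ideal.mem_span_pair]
    rintro ⟨u, v, rfl⟩
    rw [Polynomial.add_modByMonic]
    have h1 : (u * m) %ₘ m = 0 := by
      rw [Polynomial.modByMonic_eq_zero_iff_dvd hm]
      exact dvd_mul_left m u
    have h2 : (v * Polynomial.C c) %ₘ m = Polynomial.C c * (v %ₘ m) := by
      rw [mul_comm, ← Polynomial.smul_eq_C_mul, Polynomial.smul_modByMonic,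
        Polynomial.smul_eq_C_mul]
    rw [h1, h2, zero_add]
    exact Dvd.intro _ rfl
  · rintro ⟨t, ht⟩
    rw [Ideal.mem_span_pair]
    exact ⟨p /ₘ m, t, by linear_combination (Polynomial.modByMonic_add_div p m) - ht⟩

private lemma span_pair_inf_of_reg {A : Type*} [CommRing A] {m : Polynomial A}
    (hm : m.Monic) {a b : A} (hab : ∀ t : A, a ∣ b * t → a ∣ t) :
    Ideal.span {m, Polynomial.C (a * b)} =
      Ideal.span {m, Polynomial.C a} ⊓ Ideal.span {m, Polynomial.C b} := by
  ext p
  rw [Ideal.mem_inf, mem_span_monic_C hm, mem_span_monic_C hm, mem_span_monic_C hm,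
    Polynomial.C_dvd_iff_dvd_coeff, Polynomial.C_dvd_iff_dvd_coeff,
    Polynomial.C_dvd_iff_dvd_coeff]
  constructor
  · intro h
    exact ⟨fun i => (dvd_mul_right a b).trans (h i), fun i => (dvd_mul_left b a).trans (h i)⟩
  · rintro ⟨ha, hb⟩ i
    obtain ⟨u, hu⟩ := hb i
    obtain ⟨w, hw⟩ := hab u (hu ▸ ha i)
    exact ⟨w, by rw [hu, hw]; ring⟩

private lemma prime_X0 : Prime (X 0 : MvPolynomial (Fin 2) ℂ) := by
  have h : Prime ((finSuccEquiv ℂ 1) (X 0)) := by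
    rw [finSuccEquiv_X_zero]; exact Polynomial.prime_X
  exact (MulEquiv.prime_iff (e := (finSuccEquiv ℂ 1).toRingEquiv.toMulEquiv)).mp (by simpa using h)

/-- Let `n, s', r ≥ 1` with `r > s'`. In `ℂ[v,x,w]` (with `v = X 0`, `x = X 1`,
`w = X 2`) consider `I = (v*x - w^n, x^{s'} * (x^{r-s'} - v^{s'}))`,
`I₀ = (v*x - w^n, x^{s'})` and `I₁ = (v*x - w^n, x^{r-s'} - v^{s'})`. Then `I = I₀ ⊓ I₁`. -/
theorem ideal_eq_inf (n s' r : ℕ) (hn : 1 ≤ n) (hs' : 1 ≤ s') (hr : s' < r) :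
    (Ideal.span
        {(X 0 : MvPolynomial (Fin 3) ℂ) * X 1 - (X 2 : MvPolynomial (Fin 3) ℂ) ^ n,
          (X 1 : MvPolynomial (Fin 3) ℂ) ^ s' *
            ((X 1 : MvPolynomial (Fin 3) ℂ) ^ (r - s') - (X 0 : MvPolynomial (Fin 3) ℂ) ^ s')})
      = (Ideal.span
            {(X 0 : MvPolynomial (Fin 3) ℂ) * X 1 - (X 2 : MvPolynomial (Fin 3) ℂ) ^ n,
              (X 1 : MvPolynomial (Fin 3) ℂ) ^ s'}) ⊓
        (Ideal.span
            {(X 0 : MvPolynomial (Fin 3) ℂ) * X 1 - (X 2 : MvPolynomial (Fin 3) ℂ) ^ n,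
              (X 1 : MvPolynomial (Fin 3) ℂ) ^ (r - s') - (X 0 : MvPolynomial (Fin 3) ℂ) ^ s'}) := by
  classical
  set e : MvPolynomial (Fin 3) ℂ ≃+* Polynomial (MvPolynomial (Fin 2) ℂ) :=
    ((renameEquiv ℂ (Equiv.swap (0 : Fin 3) 2)).trans (finSuccEquiv ℂ 2)).toRingEquiv with he
  have e0 : e (X 0) = Polynomial.C (X 1) := by
    have h2 : ((2 : Fin 3)) = Fin.succ 1 := rfl
    simp only [he, AlgEquiv.toRingEquiv_eq_coe, AlgEquiv.coe_ringEquiv,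
      AlgEquiv.trans_apply, renameEquiv_apply, rename_X, Equiv.swap_apply_left, h2, finSuccEquiv_X_succ]
  have e1 : e (X 1) = Polynomial.C (X 0) := by
    have hswap : (Equiv.swap (0 : Fin 3) 2) 1 = Fin.succ 0 := by decide
    simp only [he, AlgEquiv.toRingEquiv_eq_coe, AlgEquiv.coe_ringEquiv,
      AlgEquiv.trans_apply, renameEquiv_apply, rename_X, hswap, finSuccEquiv_X_succ]
  have e2 : e (X 2) = Polynomial.X := by
    simp only [he, AlgEquiv.toRingEquiv_eq_coe, AlgEquiv.coe_ringEquiv,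
      AlgEquiv.trans_apply, renameEquiv_apply, rename_X, Equiv.swap_apply_right, finSuccEquiv_X_zero]
  set m : Polynomial (MvPolynomial (Fin 2) ℂ) :=
    Polynomial.X ^ n - Polynomial.C (X 0 * X 1) with hm_def
  have hm : m.Monic := Polynomial.monic_X_pow_sub_C _ (by omega)
  set a : MvPolynomial (Fin 2) ℂ := X 0 ^ s' with ha_def
  set b : MvPolynomial (Fin 2) ℂ := X 0 ^ (r - s') - X 1 ^ s' with hb_def
  have hq : e (X 0 * X 1 - X 2 ^ n) = -m := by
    rw [map_sub, map_mul, map_pow, e0, e1, e2, hm_def]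
    rw [← Polynomial.C_mul]
    ring
  have hA : e (X 1 ^ s') = Polynomial.C a := by
    rw [map_pow, e1, ← Polynomial.C_pow, ha_def]
  have hB : e (X 1 ^ (r - s') - X 0 ^ s') = Polynomial.C b := by
    rw [map_sub, map_pow, map_pow, e0, e1, ← Polynomial.C_pow, ← Polynomial.C_pow,
      ← Polynomial.C_sub, hb_def]
  have hAB : e (X 1 ^ s' * (X 1 ^ (r - s') - X 0 ^ s')) = Polynomial.C (a * b) := by
    rw [map_mul, hA, hB, Polynomial.C_mul]
  have hndvd : ¬ (X 0 : MvPolynomial (Fin 2) ℂ) ∣ b := by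
    intro hdvd
    have h1 : (X 0 : MvPolynomial (Fin 2) ℂ) ∣ X 1 ^ s' := by
      have hb' : (X 1 : MvPolynomial (Fin 2) ℂ) ^ s' = X 0 ^ (r - s') - b := by
        rw [hb_def]; ring
      rw [hb']
      exact dvd_sub (dvd_pow_self _ (by omega)) hdvd
    have h2 : (X 0 : MvPolynomial (Fin 2) ℂ) ∣ X 1 := prime_X0.dvd_of_dvd_pow h1
    obtain ⟨c, hc⟩ := h2
    have := congrArg (eval (fun i : Fin 2 => if i = 0 then (0 : ℂ) else 1)) hc
    simp at this
  have hab : ∀ t : MvPolynomial (Fin 2) ℂ, a ∣ b * t → a ∣ t := by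
    intro t ht
    exact prime_X0.pow_dvd_of_dvd_mul_left _ hndvd ht
  ext f
  rw [mem_span_pair_equiv' e, Ideal.mem_inf, mem_span_pair_equiv' e,
    mem_span_pair_equiv' e, hq, hA, hB, hAB, span_pair_neg_left, span_pair_neg_left, span_pair_neg_left,
    span_pair_inf_of_reg hm hab, Ideal.mem_inf]
end
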